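/- arXiv:1207.6918 — 4 statements merged into one kernel-verified Lean document; each statement's English description precedes it below -/
import Mathlib

section
/- Let R be a commutative ring, A a p × q matrix over R, and y ∈ R^p. Then the set of prime ideals p ∈ Spec R such that the linear system y = A x has a solution x over the residue field κ(p) is a constructible subset of Spec R, provided R is Noetherian. -/
noncomputable abbrev kappa {R : Type*} [CommRing R] (p : PrimeSpectrum R) : Type _ :=
  IsLocalRing.ResidueField (Localization.AtPrime p.asIdeal)

noncomputable instance {R : Type*} [CommRing R] (p : PrimeSpectrum R) : Algebra R (kappa p) :=
  ((IsLocalRing.residue (Localization.AtPrime p.asIdeal)).comp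
    (algebraMap R (Localization.AtPrime p.asIdeal))).toAlgebra

/-- A subset of `Spec R` is constructible if it is a finite union of sets of the
form `D(f) ∩ V(I)`. -/
def SpecConstructible {R : Type*} [CommRing R] (S : Set (PrimeSpectrum R)) : Prop :=
  ∃ (n : ℕ) (f : Fin n → R) (I : Fin n → Ideal R),
    S = ⋃ k, (PrimeSpectrum.basicOpen (f k) : Set (PrimeSpectrum R)) ∩
      PrimeSpectrum.zeroLocus (I k : Set R)

/-! Over a field, `A x = y` is solvable iff `rank [A | y] ≤ rank A`, and a matrix has rank at
least `k` iff one of its `k × k` minors is nonzero. A minor of `A` reduced to `κ(p)` is nonzero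
iff the corresponding minor over `R` lies outside `p`. So the locus is the union, over `r ≤ q`
and over the `r × r` minors `δ` of `A`, of `D(δ) ∩ V(I)`, where `I` is the ideal of
`(r + 1) × (r + 1)` minors of `[A | y]`. -/

open Module Submodule

theorem exists_embedding_linearIndependent_of_le_finrank_span {K V ι : Type*} [DivisionRing K]
    [AddCommGroup V] [Module K V] [Finite ι] (v : ι → V) {k : ℕ}
    (h : k ≤ finrank K (span K (Set.range v))) :
    ∃ g : Fin k ↪ ι, LinearIndependent K (v ∘ g) := by
  obtain ⟨κ, a, ha, hspan, hli⟩ := exists_linearIndependent' K v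
  have : Finite κ := Finite.of_injective a ha
  have : Fintype κ := Fintype.ofFinite κ
  have hcard : finrank K (span K (Set.range v)) = Fintype.card κ := by
    rw [← hspan, finrank_span_eq_card hli]
  obtain ⟨e⟩ : Nonempty (Fin k ↪ κ) :=
    Function.Embedding.nonempty_of_card_le (by rwa [Fintype.card_fin, ← hcard])
  exact ⟨e.trans ⟨a, ha⟩, hli.comp e e.injective⟩

namespace Matrix

variable {K R m n : Type*} [Field K] [CommRing R] [Fintype n]

theorem range_mulVecLin_fromCols_replicateCol (A : Matrix m n K) (y : m → K) :
    LinearMap.range (fromCols A (replicateCol Unit y)).mulVecLin =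
      LinearMap.range A.mulVecLin ⊔ K ∙ y := by
  simp only [range_mulVecLin, ← span_union]
  congr 1
  rw [col, transpose_fromCols, transpose_replicateCol]
  change Set.range (Sum.elim A.col fun _ => y) = _
  rw [Set.Sum.elim_range, Set.range_const, Set.union_singleton]

theorem exists_mulVec_eq_iff_rank_fromCols_le (A : Matrix m n K) (y : m → K) :
    (∃ x, A *ᵥ x = y) ↔ (fromCols A (replicateCol Unit y)).rank ≤ A.rank := by
  rw [rank, rank, range_mulVecLin_fromCols_replicateCol]
  change y ∈ LinearMap.range A.mulVecLin ↔ _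
  constructor
  · intro hy
    rw [sup_eq_left.mpr ((span_singleton_le_iff_mem _ _).mpr hy)]
  · intro h
    rw [eq_of_le_of_finrank_le le_sup_left h]
    exact mem_sup_right (mem_span_singleton_self y)

variable [Fintype m]

theorem le_rank_iff_exists_det_submatrix_ne_zero (A : Matrix m n K) (k : ℕ) :
    k ≤ A.rank ↔ ∃ (e : Fin k ↪ m) (g : Fin k ↪ n), (A.submatrix e g).det ≠ 0 := by
  constructor
  · intro h
    rw [rank_eq_finrank_span_cols] at h
    obtain ⟨g, hg⟩ := exists_embedding_linearIndependent_of_le_finrank_span A.col h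
    have hrank : (A.submatrix id g).rank = k := by
      rw [← rank_transpose, hg.rank_matrix (M := (A.submatrix id g)ᵀ), Fintype.card_fin]
    rw [rank_eq_finrank_span_row] at hrank
    obtain ⟨e, he⟩ :=
      exists_embedding_linearIndependent_of_le_finrank_span (A.submatrix id g).row hrank.ge
    exact ⟨e, g,
      ((isUnit_iff_isUnit_det _).mp (linearIndependent_rows_iff_isUnit.mp he)).ne_zero⟩
  · rintro ⟨e, g, h⟩
    calc k = (A.submatrix e g).rank := by rw [rank_of_det_ne_zero h, Fintype.card_fin]
      _ ≤ A.rank := rank_submatrix_le A e g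

theorem le_rank_map_iff (φ : R →+* K) (A : Matrix m n R) (k : ℕ) :
    k ≤ (A.map φ).rank ↔
      ∃ (e : Fin k ↪ m) (g : Fin k ↪ n), φ (A.submatrix e g).det ≠ 0 := by
  simp only [le_rank_iff_exists_det_submatrix_ne_zero, submatrix_map, RingHom.map_det]
  rfl

def minorsIdeal (A : Matrix m n R) (k : ℕ) : Ideal R :=
  Ideal.span (Set.range fun eg : (Fin k ↪ m) × (Fin k ↪ n) => (A.submatrix eg.1 eg.2).det)

theorem rank_map_lt_iff_minorsIdeal_le_ker (φ : R →+* K) (A : Matrix m n R) (k : ℕ) :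
    (A.map φ).rank < k ↔ A.minorsIdeal k ≤ RingHom.ker φ := by
  rw [← not_le, le_rank_map_iff, minorsIdeal, Ideal.span_le, Set.range_subset_iff]
  simp

end Matrix

open PrimeSpectrum Matrix

theorem specConstructible_iUnion {R ι : Type*} [CommRing R] [Finite ι] (f : ι → R)
    (I : ι → Ideal R) :
    SpecConstructible
      (⋃ i, (basicOpen (f i) : Set (PrimeSpectrum R)) ∩ zeroLocus (I i : Set R)) := by
  obtain ⟨n, ⟨e⟩⟩ := Finite.exists_equiv_fin ι
  exact ⟨n, f ∘ e.symm, I ∘ e.symm, (e.symm.surjective.iUnion_comp _).symm⟩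

section kappa

variable {R m n : Type*} [CommRing R] [Fintype m] [Fintype n] (p : PrimeSpectrum R)

theorem ker_algebraMap_kappa : RingHom.ker (algebraMap R (kappa p)) = p.asIdeal := by
  ext x
  exact (IsLocalRing.residue_eq_zero_iff _).trans
    (IsLocalization.AtPrime.to_map_mem_maximal_iff (Localization.AtPrime p.asIdeal) p.asIdeal x)

theorem le_rank_map_kappa_iff (A : Matrix m n R) (k : ℕ) :
    k ≤ (A.map (algebraMap R (kappa p))).rank ↔
      ∃ (e : Fin k ↪ m) (g : Fin k ↪ n), p ∈ basicOpen (A.submatrix e g).det := by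
  simp only [le_rank_map_iff, mem_basicOpen, ← ker_algebraMap_kappa p, RingHom.mem_ker]

theorem rank_map_kappa_lt_iff (A : Matrix m n R) (k : ℕ) :
    (A.map (algebraMap R (kappa p))).rank < k ↔ p ∈ zeroLocus (A.minorsIdeal k : Set R) := by
  rw [rank_map_lt_iff_minorsIdeal_le_ker, ker_algebraMap_kappa, mem_zeroLocus,
    SetLike.coe_subset_coe]

end kappa

theorem solvable_locus_constructible_general {R : Type*} [CommRing R]
    {P Q : ℕ} (A : Matrix (Fin P) (Fin Q) R) (y : Fin P → R) :
    SpecConstructible {p : PrimeSpectrum R | ∃ x : Fin Q → kappa p,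
      (A.map (algebraMap R (kappa p))).mulVec x =
        fun i => algebraMap R (kappa p) (y i)} := by
  let B := fromCols A (replicateCol Unit y)
  convert specConstructible_iUnion
    (fun t : Σ r : Fin (Q + 1), (Fin r ↪ Fin P) × (Fin r ↪ Fin Q) =>
      (A.submatrix t.2.1 t.2.2).det)
    (fun t => B.minorsIdeal (t.1 + 1)) using 1
  ext p
  have hB : B.map (algebraMap R (kappa p)) = fromCols (A.map (algebraMap R (kappa p)))
      (replicateCol Unit fun i => algebraMap R (kappa p) (y i)) :=
    fromCols_map _ _ _
  have hrank : (A.map (algebraMap R (kappa p))).rank ≤ Q := rank_le_width _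
  -- `rank A ≤ Q` over every `κ(p)`, so the rank threshold `r` can range over `Fin (Q + 1)`.
  have hfin :
      ∀ a b : ℕ, b ≤ Q → (a ≤ b ↔ ∃ r : Fin (Q + 1), (r : ℕ) ≤ b ∧ a < r + 1) :=
    fun a b hb => ⟨fun h => ⟨⟨b, Nat.lt_succ_of_le hb⟩, le_rfl, Nat.lt_succ_of_le h⟩,
      fun ⟨r, h₁, h₂⟩ => by omega⟩
  rw [Set.mem_ofPred_eq, exists_mulVec_eq_iff_rank_fromCols_le, ← hB, hfin _ _ hrank]
  simp only [le_rank_map_kappa_iff, rank_map_kappa_lt_iff, Set.mem_iUnion, Set.mem_inter_iff,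
    SetLike.mem_coe, Sigma.exists, Prod.exists, exists_and_right]

/-- For a Noetherian commutative ring `R`, a `p × q` matrix `A` over `R`, and `y ∈ R^p`, the
set of primes `𝔭` such that the system `y = A x` has a solution over the residue field
`κ(𝔭)` is a constructible subset of `Spec R`. -/
theorem solvable_locus_constructible {R : Type*} [CommRing R] [IsNoetherianRing R]
    {P Q : ℕ} (A : Matrix (Fin P) (Fin Q) R) (y : Fin P → R) :
    SpecConstructible {p : PrimeSpectrum R | ∃ x : Fin Q → kappa p,
      (A.map (algebraMap R (kappa p))).mulVec x =
        fun i => algebraMap R (kappa p) (y i)} :=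
  solvable_locus_constructible_general A y
end

section
/- Let R be a commutative ring, A a p × q matrix over R, f the determinant of the ℓ × ℓ submatrix in the upper left corner of A, and I the ideal generated by all (ℓ+1) × (ℓ+1) minors of A. Suppose A has the block form where its upper left ℓ × ℓ block is f times the identity, its upper right ℓ × (q−ℓ) block is zero. Let y ∈ R^p and let J be the ideal generated by the elements f·y_i − Σ_{j=1}^{ℓ} a_{i,j} y_j for i = ℓ+1, …, p. Then for every prime ideal p of R with f ∉ p and I ⊆ p, the system y = A x has a solution over κ(p) if and only if J ⊆ p. -/
/-!
Over the residue field the hypotheses make `A` a block matrix `[[f • 1, 0], [C, 0]]` with `f`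
invertible. The first `ℓ` equations of `y = A x` force `x j = y j / f` for `j < ℓ`, and the
remaining ones then read `f · y i = Σ_{j<ℓ} C i j · y j`, i.e. they say that the generators of
`J` vanish in `κ(p)`, which is exactly `J ⊆ p`.
-/

lemma kappa_algebraMap_eq_zero_iff {R : Type*} [CommRing R] (p : PrimeSpectrum R) (r : R) :
    algebraMap R (kappa p) r = 0 ↔ r ∈ p.asIdeal :=
  IsLocalRing.residue_eq_zero_iff _ |>.trans <|
    IsLocalization.AtPrime.to_map_mem_maximal_iff _ p.asIdeal r

namespace Matrix

section BlockSystem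

variable {α : Type*} {P Q ℓ : ℕ} (hℓP : ℓ ≤ P) (hℓQ : ℓ ≤ Q)

lemma mulVec_eq_sum_castLE [NonUnitalNonAssocSemiring α] {m : Type*} (B : Matrix m (Fin Q) α)
    (hcol : ∀ i (j : Fin Q), ℓ ≤ (j : ℕ) → B i j = 0) (x : Fin Q → α) (i : m) :
    (B *ᵥ x) i = ∑ j : Fin ℓ, B i (Fin.castLE hℓQ j) * x (Fin.castLE hℓQ j) := by
  refine (Fintype.sum_of_injective _ (Fin.castLE_injective hℓQ) _ _ ?_ fun _ => rfl).symm
  rintro j hj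
  have : ℓ ≤ (j : ℕ) := not_lt.mp fun hlt => hj ⟨⟨j, hlt⟩, rfl⟩
  simp [hcol i j this]

variable [CommRing α] {B : Matrix (Fin P) (Fin Q) α} {c : α}
  (hblock : ∀ (i : Fin P) (j : Fin Q), (i : ℕ) < ℓ → (j : ℕ) < ℓ →
    B i j = if (i : ℕ) = (j : ℕ) then c else 0)
  (hcol : ∀ i (j : Fin Q), ℓ ≤ (j : ℕ) → B i j = 0)
include hblock hcol

lemma mulVec_castLE_of_block (x : Fin Q → α) (i : Fin ℓ) :
    (B *ᵥ x) (Fin.castLE hℓP i) = c * x (Fin.castLE hℓQ i) := by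
  have hdiag (k : Fin ℓ) : B (Fin.castLE hℓP i) (Fin.castLE hℓQ k) = if i = k then c else 0 := by
    rw [hblock _ _ (by simp) (by simp)]
    simp [Fin.ext_iff]
  simp [mulVec_eq_sum_castLE hℓQ B hcol, hdiag]

lemma exists_mulVec_eq_iff_of_block (hc : IsUnit c) (z : Fin P → α) :
    (∃ x, B *ᵥ x = z) ↔ ∀ i : Fin P, ℓ ≤ (i : ℕ) →
      c * z i = ∑ j : Fin ℓ, B i (Fin.castLE hℓQ j) * z (Fin.castLE hℓP j) := by
  constructor
  · rintro ⟨x, rfl⟩ i -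
    simp_rw [mulVec_castLE_of_block hℓP hℓQ hblock hcol, mulVec_eq_sum_castLE hℓQ B hcol,
      Finset.mul_sum]
    exact Finset.sum_congr rfl fun _ _ => by ring
  · intro hlow
    let x : Fin Q → α := fun j =>
      if h : (j : ℕ) < ℓ then ↑hc.unit⁻¹ * z (Fin.castLE hℓP ⟨j, h⟩) else 0
    have hx (k : Fin ℓ) : x (Fin.castLE hℓQ k) = ↑hc.unit⁻¹ * z (Fin.castLE hℓP k) :=
      dif_pos k.isLt
    refine ⟨x, funext fun i => ?_⟩
    rcases lt_or_ge (i : ℕ) ℓ with hi | hi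
    · obtain ⟨k, rfl⟩ : ∃ k : Fin ℓ, Fin.castLE hℓP k = i := ⟨⟨i, hi⟩, rfl⟩
      rw [mulVec_castLE_of_block hℓP hℓQ hblock hcol, hx, ← mul_assoc, hc.mul_val_inv, one_mul]
    · calc (B *ᵥ x) i
          = ↑hc.unit⁻¹ * ∑ j : Fin ℓ, B i (Fin.castLE hℓQ j) * z (Fin.castLE hℓP j) := by
            simp_rw [mulVec_eq_sum_castLE hℓQ B hcol, hx, Finset.mul_sum]
            exact Finset.sum_congr rfl fun _ _ => by ring
        _ = z i := by rw [← hlow i hi, ← mul_assoc, hc.val_inv_mul, one_mul]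

end BlockSystem

end Matrix

/-- Let `A` be a `P × Q` matrix over `R` whose upper left `ℓ × ℓ` block is `f` times the
identity and whose upper right block is zero, let `y ∈ R^P`, and let `J` be the ideal
generated by the elements `f·y i − Σ_{j<ℓ} A i j · y j` for `ℓ ≤ i`.  Then for every prime
`p` with `f ∉ p` and all entries `A i j ∈ p` for `ℓ ≤ i`, `ℓ ≤ j` (which follows from the
ideal of `(ℓ+1)`-minors being contained in `p`), the system `y = A x` is solvable over the
residue field `κ(p)` iff `J ⊆ p`. -/
theorem solvable_iff_J_le_prime {R : Type*} [CommRing R]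
    {P Q ℓ : ℕ} (hℓP : ℓ ≤ P) (hℓQ : ℓ ≤ Q)
    (A : Matrix (Fin P) (Fin Q) R) (f : R) (y : Fin P → R)
    (hblock : ∀ (i : Fin P) (j : Fin Q), (i : ℕ) < ℓ → (j : ℕ) < ℓ →
      A i j = if (i : ℕ) = (j : ℕ) then f else 0)
    (hzero : ∀ (i : Fin P) (j : Fin Q), (i : ℕ) < ℓ → ℓ ≤ (j : ℕ) → A i j = 0)
    (J : Ideal R)
    (hJ : J = Ideal.span { r : R | ∃ i : Fin P, ℓ ≤ (i : ℕ) ∧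
      r = f * y i - ∑ j : Fin ℓ, A i (Fin.castLE hℓQ j) * y (Fin.castLE hℓP j) })
    (p : PrimeSpectrum R) (hf : f ∉ p.asIdeal)
    (hmem : ∀ (i : Fin P) (j : Fin Q), ℓ ≤ (i : ℕ) → ℓ ≤ (j : ℕ) → A i j ∈ p.asIdeal) :
    (∃ x : Fin Q → kappa p,
        (A.map (algebraMap R (kappa p))).mulVec x =
          fun i => algebraMap R (kappa p) (y i)) ↔ J ≤ p.asIdeal := by
  set φ := algebraMap R (kappa p)
  have hφf : IsUnit (φ f) :=
    isUnit_iff_ne_zero.mpr (mt (kappa_algebraMap_eq_zero_iff p f).mp hf)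
  have hblockφ (i : Fin P) (j : Fin Q) (hi : (i : ℕ) < ℓ) (hj : (j : ℕ) < ℓ) :
      A.map φ i j = if (i : ℕ) = (j : ℕ) then φ f else 0 := by
    simp [hblock i j hi hj, apply_ite φ]
  have hcolφ (i : Fin P) (j : Fin Q) (hj : ℓ ≤ (j : ℕ)) : A.map φ i j = 0 := by
    rcases lt_or_ge (i : ℕ) ℓ with hi | hi
    · simp [hzero i j hi hj]
    · exact (kappa_algebraMap_eq_zero_iff p _).mpr (hmem i j hi hj)
  have hJp : J ≤ p.asIdeal ↔ ∀ i : Fin P, ℓ ≤ (i : ℕ) →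
      f * y i - ∑ j : Fin ℓ, A i (Fin.castLE hℓQ j) * y (Fin.castLE hℓP j) ∈ p.asIdeal := by
    rw [hJ, Ideal.span_le]
    exact ⟨fun h i hi => h ⟨i, hi, rfl⟩, by rintro h _ ⟨i, hi, rfl⟩; exact h i hi⟩
  rw [Matrix.exists_mulVec_eq_iff_of_block hℓP hℓQ hblockφ hcolφ hφf, hJp]
  refine forall₂_congr fun i _ => ?_
  simp [← kappa_algebraMap_eq_zero_iff, φ, sub_eq_zero]
end

section
/- For s ∈ ℂ \ {−1, −i, 0, i, 1}, the intersection of the quadrics Q = V(x₀² + x₁² + x₂² + x₃²) and Q_s = V(s²x₀² + x₁² − x₂² − s²x₃²) in ℙ³(ℂ) is a smooth curve. -/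
open Complex

/-!
Both gradients are diagonal rescalings of `v`: `2v` and `2μ ⊙ v` with `μ = (s², 1, -1, -s²)`,
whose entries are pairwise distinct exactly because `s ∉ {0, ±1, ±i}`. Hence any two coordinates
`i ≠ j` with `vᵢ, vⱼ ≠ 0` give the nonzero `2 × 2` minor `4 vᵢ vⱼ (μⱼ - μᵢ)`. Such a pair exists
because a nonzero vector with `∑ vₖ² = 0` cannot be supported on a single coordinate.
-/

theorem LinearIndependent.pair_of_mul_sub_mul_ne_zero {R ι : Type*} [CommRing R]
    [NoZeroDivisors R] {x y : ι → R} {i j : ι} (h : x i * y j - x j * y i ≠ 0) :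
    LinearIndependent R ![x, y] := by
  rw [LinearIndependent.pair_iff]
  intro a b hab
  have hi := congrFun hab i
  have hj := congrFun hab j
  simp only [Pi.add_apply, Pi.smul_apply, smul_eq_mul, Pi.zero_apply] at hi hj
  -- Cramer's rule for the 2 × 2 system given by coordinates `i` and `j`.
  have ha : a * (x i * y j - x j * y i) = 0 := by linear_combination y j * hi - y i * hj
  have hb : b * (x i * y j - x j * y i) = 0 := by linear_combination x i * hj - x j * hi
  exact ⟨(mul_eq_zero.mp ha).resolve_right h, (mul_eq_zero.mp hb).resolve_right h⟩

theorem linearIndependent_pair_mul_of_ne_zero {R ι : Type*} [CommRing R] [NoZeroDivisors R]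
    {α β v : ι → R} {i j : ι} (hi : v i ≠ 0) (hj : v j ≠ 0) (hαβ : α i * β j ≠ α j * β i) :
    LinearIndependent R ![fun k => α k * v k, fun k => β k * v k] := by
  refine LinearIndependent.pair_of_mul_sub_mul_ne_zero (i := i) (j := j) ?_
  have hminor : α i * v i * (β j * v j) - α j * v j * (β i * v i)
      = v i * v j * (α i * β j - α j * β i) := by ring
  rw [hminor]
  exact mul_ne_zero (mul_ne_zero hi hj) (sub_ne_zero.mpr hαβ)

theorem exists_ne_of_sum_sq_eq_zero {R ι : Type*} [CommSemiring R] [NoZeroDivisors R]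
    [Fintype ι] {v : ι → R} (hv : v ≠ 0) (hsum : ∑ k, v k ^ 2 = 0) :
    ∃ i j, i ≠ j ∧ v i ≠ 0 ∧ v j ≠ 0 := by
  obtain ⟨i, hi⟩ : ∃ i, v i ≠ 0 := Function.ne_iff.mp hv
  by_contra! hsupp
  have hsingle : ∑ k, v k ^ 2 = v i ^ 2 :=
    Finset.sum_eq_single i (fun j _ hji => by simp [hsupp i j (Ne.symm hji) hi]) (by simp)
  exact hi (pow_eq_zero_iff two_ne_zero |>.mp (hsingle ▸ hsum))

theorem Complex.sq_ne_neg_one_iff {s : ℂ} : s ^ 2 ≠ -1 ↔ s ≠ I ∧ s ≠ -I := by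
  rw [← I_sq, Ne, sq_eq_sq_iff_eq_or_eq_neg, not_or]

theorem Complex.injective_vec_self_one_neg_one_neg_self {t : ℂ} (h0 : t ≠ 0) (h1 : t ≠ 1)
    (hm1 : t ≠ -1) :
    Function.Injective ![t, 1, -1, -t] := by
  intro i j hij
  fin_cases i <;> fin_cases j <;> simp at hij ⊢ <;> grind

/-- For `s ∈ ℂ \ {−1,−i,0,i,1}`, the intersection of the quadrics
`Q = V(x₀²+x₁²+x₂²+x₃²)` and `Q_s = V(s²x₀²+x₁²−x₂²−s²x₃²)` in `ℙ³(ℂ)` is a smooth curve: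
at every nonzero `v ∈ ℂ⁴` lying on both quadrics, the gradients of the two defining
quadratic forms are linearly independent over `ℂ`. -/
theorem quadric_intersection_smooth (s : ℂ) (hs : s ∉ ({-1, -I, 0, I, 1} : Set ℂ)) :
    ∀ v : Fin 4 → ℂ, v ≠ 0 →
      v 0 ^ 2 + v 1 ^ 2 + v 2 ^ 2 + v 3 ^ 2 = 0 →
      s ^ 2 * v 0 ^ 2 + v 1 ^ 2 - v 2 ^ 2 - s ^ 2 * v 3 ^ 2 = 0 →
      LinearIndependent ℂ
        ![![2 * v 0, 2 * v 1, 2 * v 2, 2 * v 3],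
          ![2 * s ^ 2 * v 0, 2 * v 1, -(2 * v 2), -(2 * s ^ 2 * v 3)]] := by
  simp only [Set.mem_insert_iff, Set.mem_singleton_iff, not_or] at hs
  obtain ⟨hm1, hmI, h0, hI, h1⟩ := hs
  intro v hv hQ _
  obtain ⟨i, j, hij, hvi, hvj⟩ :=
    exists_ne_of_sum_sq_eq_zero hv (by simpa [Fin.sum_univ_four] using hQ)
  set μ : Fin 4 → ℂ := ![s ^ 2, 1, -1, -s ^ 2]
  have hμ : Function.Injective μ := injective_vec_self_one_neg_one_neg_self
    (pow_ne_zero 2 h0) (sq_ne_one_iff.mpr ⟨h1, hm1⟩) (sq_ne_neg_one_iff.mpr ⟨hI, hmI⟩)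
  have hgrad := linearIndependent_pair_mul_of_ne_zero (α := fun _ => 2)
    (β := fun k => 2 * μ k) hvi hvj fun h => hij (hμ (by linear_combination h / 4)).symm
  have hgradients : ![![2 * v 0, 2 * v 1, 2 * v 2, 2 * v 3],
      ![2 * s ^ 2 * v 0, 2 * v 1, -(2 * v 2), -(2 * s ^ 2 * v 3)]]
      = ![fun k => 2 * v k, fun k => 2 * μ k * v k] := by
    ext m k
    fin_cases m <;> fin_cases k <;> simp [μ]
  exact hgradients ▸ hgrad
end

section
/- With s ∈ ℂ \ {−1,−i,0,i,1} and E_s = Q ∩ Q_s the smooth intersection curve, the line L_α = closure of {[1,t,it,i]} meets E_s exactly in the two points α₁ = [1,is,−s,i] and α₂ = [1,−is,s,i], and the line L_β = closure of {[1,t,−it,i]} meets E_s exactly in β₁ = [1,is,s,i] and β₂ = [1,−is,−s,i]. -/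
open Complex

/-- `ℙ³(ℂ)` as the projectivization of `ℂ⁴`. -/
abbrev P3 : Type := Projectivization ℂ (Fin 4 → ℂ)

lemma ne_zero_of_entry {v : Fin 4 → ℂ} (i : Fin 4) (h : v i ≠ 0) : v ≠ 0 :=
  fun hv => h (by simp [hv])

/-- The smooth quadric `Q = V(x₀² + x₁² + x₂² + x₃²) ⊆ ℙ³(ℂ)`. -/
def Quadric : Set P3 :=
  {x | x.rep 0 ^ 2 + x.rep 1 ^ 2 + x.rep 2 ^ 2 + x.rep 3 ^ 2 = 0}

/-- The quadric `Q_s = V(s²x₀² + x₁² − x₂² − s²x₃²)`. -/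
def QuadricS (s : ℂ) : Set P3 :=
  {x | s ^ 2 * x.rep 0 ^ 2 + x.rep 1 ^ 2 - x.rep 2 ^ 2 - s ^ 2 * x.rep 3 ^ 2 = 0}

/-- The line `L_α`, the closure of `{[1,t,it,i] : t ∈ ℂ}` (with its point at infinity). -/
def LineAlpha : Set P3 :=
  {x | (∃ t : ℂ, x = Projectivization.mk ℂ ![1, t, I * t, I]
        (ne_zero_of_entry 0 (by simp))) ∨
      x = Projectivization.mk ℂ ![0, 1, I, 0] (ne_zero_of_entry 1 (by simp))}

/-- The line `L_β`, the closure of `{[1,t,−it,i] : t ∈ ℂ}` (with its point at infinity). -/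
def LineBeta : Set P3 :=
  {x | (∃ t : ℂ, x = Projectivization.mk ℂ ![1, t, -(I * t), I]
        (ne_zero_of_entry 0 (by simp))) ∨
      x = Projectivization.mk ℂ ![0, 1, -I, 0] (ne_zero_of_entry 1 (by simp))}

/-! Both lines have the shape `{[1, t, u t, i]} ∪ {[0, 1, w, 0]}` with `(u t)² = -t²` and
`w² = -1`. Such a line lies on `Q`, while the equation of `Q_s` restricts to `2 (t² + s²)` on its
affine part and to `2` at its point at infinity, so it meets `E_s` exactly at `t = ±is`. These two
points are distinct for `s ≠ 0`, since representatives with first coordinate `1` are unique. -/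

section Projectivization

variable {K V : Type*} [Field K] [AddCommGroup V] [Module K V]

theorem Projectivization.homogeneous_rep_eq_zero_iff {F : V → K} {d : ℕ}
    (hF : ∀ (c : K) (v : V), F (c • v) = c ^ d * F v) {v : V} (hv : v ≠ 0) :
    F (Projectivization.mk K v hv).rep = 0 ↔ F v = 0 := by
  obtain ⟨a, ha⟩ := Projectivization.exists_smul_eq_mk_rep K v hv
  rw [← ha, Units.smul_def, hF, mul_eq_zero, or_iff_right (pow_ne_zero _ a.ne_zero)]

theorem Projectivization.mk_eq_mk_iff_of_apply_eq_one {ι : Type*} {v w : ι → K}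
    (hv : v ≠ 0) (hw : w ≠ 0) (i : ι) (hvi : v i = 1) (hwi : w i = 1) :
    Projectivization.mk K v hv = Projectivization.mk K w hw ↔ v = w := by
  rw [Projectivization.mk_eq_mk_iff']
  constructor
  · rintro ⟨a, rfl⟩
    obtain rfl : a = 1 := by simpa [hwi] using hvi
    exact one_smul K w
  · rintro rfl
    exact ⟨1, one_smul K v⟩

end Projectivization

open Projectivization

lemma mk_mem_Quadric_iff (v : Fin 4 → ℂ) (hv : v ≠ 0) :
    mk ℂ v hv ∈ Quadric ↔ v 0 ^ 2 + v 1 ^ 2 + v 2 ^ 2 + v 3 ^ 2 = 0 :=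
  homogeneous_rep_eq_zero_iff (d := 2)
    (F := fun x : Fin 4 → ℂ => x 0 ^ 2 + x 1 ^ 2 + x 2 ^ 2 + x 3 ^ 2)
    (fun c x => by simp only [Pi.smul_apply, smul_eq_mul]; ring) hv

lemma mk_mem_QuadricS_iff (s : ℂ) (v : Fin 4 → ℂ) (hv : v ≠ 0) :
    mk ℂ v hv ∈ QuadricS s ↔ s ^ 2 * v 0 ^ 2 + v 1 ^ 2 - v 2 ^ 2 - s ^ 2 * v 3 ^ 2 = 0 :=
  homogeneous_rep_eq_zero_iff (d := 2)
    (F := fun x : Fin 4 → ℂ => s ^ 2 * x 0 ^ 2 + x 1 ^ 2 - x 2 ^ 2 - s ^ 2 * x 3 ^ 2)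
    (fun c x => by simp only [Pi.smul_apply, smul_eq_mul]; ring) hv

section Lines

variable {t u w : ℂ}

lemma mk_affine_mem_Quadric (hu : u ^ 2 = -t ^ 2) :
    mk ℂ ![1, t, u, I] (ne_zero_of_entry 0 (by simp)) ∈ Quadric := by
  rw [mk_mem_Quadric_iff]
  simp only [Matrix.cons_val, one_pow, hu, I_sq]
  ring

lemma mk_affine_mem_QuadricS_iff (hu : u ^ 2 = -t ^ 2) (s : ℂ) :
    mk ℂ ![1, t, u, I] (ne_zero_of_entry 0 (by simp)) ∈ QuadricS s ↔
      t = I * s ∨ t = -(I * s) := by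
  have factor :
      s ^ 2 * 1 ^ 2 + t ^ 2 - u ^ 2 - s ^ 2 * I ^ 2 = 2 * ((t - I * s) * (t + I * s)) := by
    linear_combination -hu + s ^ 2 * I_sq
  rw [mk_mem_QuadricS_iff]
  simp only [Matrix.cons_val]
  rw [factor, mul_eq_zero, mul_eq_zero, sub_eq_zero, add_eq_zero_iff_eq_neg]
  simp only [two_ne_zero, false_or]

lemma mk_infinity_not_mem_QuadricS (hw : w ^ 2 = -1) (s : ℂ) :
    mk ℂ ![0, 1, w, 0] (ne_zero_of_entry 1 (by simp)) ∉ QuadricS s := by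
  rw [mk_mem_QuadricS_iff]
  simp [hw]

end Lines

def paramLine (u : ℂ → ℂ) (w : ℂ) : Set P3 :=
  {x | (∃ t : ℂ, x = mk ℂ ![1, t, u t, I] (ne_zero_of_entry 0 (by simp))) ∨
      x = mk ℂ ![0, 1, w, 0] (ne_zero_of_entry 1 (by simp))}

lemma LineAlpha_eq_paramLine : LineAlpha = paramLine (fun t => I * t) I := rfl

lemma LineBeta_eq_paramLine : LineBeta = paramLine (fun t => -(I * t)) (-I) := rfl

lemma paramLine_inter_Es {u : ℂ → ℂ} {w : ℂ} (hu : ∀ t, u t ^ 2 = -t ^ 2) (hw : w ^ 2 = -1)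
    (s : ℂ) :
    paramLine u w ∩ (Quadric ∩ QuadricS s) =
      {mk ℂ ![1, I * s, u (I * s), I] (ne_zero_of_entry 0 (by simp)),
       mk ℂ ![1, -(I * s), u (-(I * s)), I] (ne_zero_of_entry 0 (by simp))} := by
  ext x
  simp only [paramLine, Set.mem_inter_iff, Set.mem_insert_iff, Set.mem_singleton_iff,
    Set.mem_ofPred_eq]
  constructor
  · rintro ⟨⟨t, rfl⟩ | rfl, -, hQs⟩
    · rcases (mk_affine_mem_QuadricS_iff (hu t) s).1 hQs with rfl | rfl
      exacts [Or.inl rfl, Or.inr rfl]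
    · exact absurd hQs (mk_infinity_not_mem_QuadricS hw s)
  · rintro (rfl | rfl) <;> refine ⟨Or.inl ⟨_, rfl⟩, mk_affine_mem_Quadric (hu _),
      (mk_affine_mem_QuadricS_iff (hu _) s).2 (by simp only [true_or, or_true])⟩

/-- For `s ∈ ℂ \ {−1,−i,0,i,1}`, the line `L_α` meets the curve `E_s = Q ∩ Q_s` exactly in
the two (distinct) points `α₁ = [1,is,−s,i]` and `α₂ = [1,−is,s,i]`, and `L_β` meets `E_s`
exactly in `β₁ = [1,is,s,i]` and `β₂ = [1,−is,−s,i]`. -/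
theorem lines_meet_Es (s : ℂ) (hs : s ∉ ({-1, -I, 0, I, 1} : Set ℂ)) :
    LineAlpha ∩ (Quadric ∩ QuadricS s) =
      {Projectivization.mk ℂ ![1, I * s, -s, I] (ne_zero_of_entry 0 (by simp)),
       Projectivization.mk ℂ ![1, -(I * s), s, I] (ne_zero_of_entry 0 (by simp))} ∧
    LineBeta ∩ (Quadric ∩ QuadricS s) =
      {Projectivization.mk ℂ ![1, I * s, s, I] (ne_zero_of_entry 0 (by simp)),
       Projectivization.mk ℂ ![1, -(I * s), -s, I] (ne_zero_of_entry 0 (by simp))} ∧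
    Projectivization.mk ℂ ![1, I * s, -s, I] (ne_zero_of_entry 0 (by simp)) ≠
      Projectivization.mk ℂ ![1, -(I * s), s, I] (ne_zero_of_entry 0 (by simp)) ∧
    Projectivization.mk ℂ ![1, I * s, s, I] (ne_zero_of_entry 0 (by simp)) ≠
      Projectivization.mk ℂ ![1, -(I * s), -s, I] (ne_zero_of_entry 0 (by simp)) := by
  have hs0 : s ≠ 0 := fun h => hs (by simp [h])
  have hIs : I * s ≠ -(I * s) := self_ne_neg.2 (mul_ne_zero I_ne_zero hs0)
  have hII : I * (I * s) = -s := by rw [← mul_assoc, I_mul_I, neg_one_mul]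
  have hα : ∀ t, (I * t) ^ 2 = -t ^ 2 := fun t => by rw [mul_pow, I_sq, neg_one_mul]
  have hβ : ∀ t, (-(I * t)) ^ 2 = -t ^ 2 := fun t => by rw [neg_sq, hα]
  refine ⟨?_, ?_, ?_, ?_⟩
  · rw [LineAlpha_eq_paramLine, paramLine_inter_Es hα I_sq]
    simp only [mul_neg, hII, neg_neg]
  · rw [LineBeta_eq_paramLine, paramLine_inter_Es hβ (by rw [neg_sq, I_sq])]
    simp only [mul_neg, hII, neg_neg]
  all_goals
    rw [Ne, mk_eq_mk_iff_of_apply_eq_one _ _ 0 rfl rfl]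
    exact fun h => hIs (congrFun h 1)
end
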